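/- arXiv:2102.01540 — 3 statements merged into one kernel-verified Lean document; each statement's English description precedes it below -/
import Mathlib

section
/- Let u and v be twins in a graph G, i.e., N(u) = N(v) and d(u) = d(v) = 3, with u and v non-adjacent. If there is an edge between two vertices of N(u), then there exists a maximum independent set of G containing both u and v (and hence excluding all of N(u)). -/
variable {V : Type*} [Fintype V] [DecidableEq V]

def IsIndep (G : SimpleGraph V) (I : Finset V) : Prop :=
  ∀ u ∈ I, ∀ v ∈ I, ¬ G.Adj u v

def IsMaxIndep (G : SimpleGraph V) (I : Finset V) : Prop :=
  IsIndep G I ∧ ∀ J : Finset V, IsIndep G J → J.card ≤ I.card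

/-! Take a maximum independent set `M` and replace `M ∩ N(u)` by `{u, v}`; the result is still
independent because every neighbour of `u` or `v` lies in `N(u)`. If `M` meets `N(u)` then
`u, v ∉ M`, and `M` misses an endpoint of the edge inside `N(u)`, so `|M ∩ N(u)| ≤ 2`: the new
set is at least as large as `M`. -/

open Finset

section

variable {α : Type*} {G : SimpleGraph α}

namespace IsIndep

theorem sdiff_union [DecidableEq α] {M S N : Finset α} (hM : IsIndep G M) (hS : IsIndep G S)
    (hSN : ∀ s ∈ S, ∀ x, G.Adj s x → x ∈ N) : IsIndep G ((M \ N) ∪ S) := by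
  intro x hx y hy hxy
  simp only [mem_union, mem_sdiff] at hx hy
  rcases hx with ⟨hxM, hxN⟩ | hxS <;> rcases hy with ⟨hyM, hyN⟩ | hyS
  · exact hM x hxM y hyM hxy
  · exact hxN (hSN y hyS x hxy.symm)
  · exact hyN (hSN x hxS y hxy)
  · exact hS x hxS y hyS hxy

theorem notMem_of_adj {M : Finset α} (hM : IsIndep G M) {x w : α} (hw : w ∈ M)
    (hxw : G.Adj x w) : x ∉ M :=
  fun hx => hM x hx w hw hxw

theorem card_inter_lt_of_adj [DecidableEq α] {M N : Finset α} (hM : IsIndep G M) {a b : α}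
    (ha : a ∈ N) (hb : b ∈ N) (hab : G.Adj a b) : #(M ∩ N) < #N := by
  refine card_lt_card ⟨inter_subset_right, fun hN => ?_⟩
  exact hM a (mem_of_mem_inter_left (hN ha)) b (mem_of_mem_inter_left (hN hb)) hab

end IsIndep

theorem IsMaxIndep.of_card_le {M I : Finset α} (hM : IsMaxIndep G M)
    (hI : IsIndep G I) (hcard : #M ≤ #I) : IsMaxIndep G I :=
  ⟨hI, fun J hJ => (hM.2 J hJ).trans hcard⟩

theorem exists_isMaxIndep [Fintype α] (G : SimpleGraph α) : ∃ M, IsMaxIndep G M := by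
  classical
  obtain ⟨M, hM, hmax⟩ := exists_max_image ((univ : Finset (Finset α)).filter (IsIndep G)) card
    ⟨∅, mem_filter.mpr ⟨mem_univ _, by simp [IsIndep]⟩⟩
  exact ⟨M, (mem_filter.mp hM).2, fun J hJ => hmax J (mem_filter.mpr ⟨mem_univ _, hJ⟩)⟩

theorem card_le_card_sdiff_union [DecidableEq α] {M N S : Finset α}
    (h : #(M ∩ N) ≤ #(S \ M)) : #M ≤ #((M \ N) ∪ S) :=
  calc #M = #(M \ N) + #(M ∩ N) := (card_sdiff_add_card_inter M N).symm
    _ ≤ #(M \ N) + #(S \ M) := by gcongr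
    _ = #((M \ N) ∪ (S \ M)) :=
        (card_union_of_disjoint (disjoint_sdiff_self_right.mono_left sdiff_subset)).symm
    _ ≤ #((M \ N) ∪ S) := card_le_card (union_subset_union le_rfl sdiff_subset)

end

theorem twin_with_edge_in_nbhd (G : SimpleGraph V) [DecidableRel G.Adj] (u v : V)
    (huv : ¬ G.Adj u v) (hne : u ≠ v)
    (htwin : G.neighborFinset u = G.neighborFinset v)
    (hdeg : G.degree u = 3)
    (hedge : ∃ a ∈ G.neighborFinset u, ∃ b ∈ G.neighborFinset u, G.Adj a b) :
    ∃ I : Finset V, IsMaxIndep G I ∧ u ∈ I ∧ v ∈ I ∧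
      ∀ x ∈ G.neighborFinset u, x ∉ I := by
  obtain ⟨a, ha, b, hb, hab⟩ := hedge
  obtain ⟨M, hM⟩ := exists_isMaxIndep G
  set N := G.neighborFinset u
  have hS : IsIndep G {u, v} := by
    have hvu : ¬ G.Adj v u := fun h => huv h.symm
    simp only [IsIndep, mem_insert, mem_singleton]
    rintro x (rfl | rfl) y (rfl | rfl) <;> simp [huv, hvu]
  have hSN : ∀ s ∈ ({u, v} : Finset V), ∀ x, G.Adj s x → x ∈ N := by
    simp only [mem_insert, mem_singleton]
    rintro s (rfl | rfl) x hx
    · simpa [N] using hx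
    · simpa [N, htwin] using hx
  have hcard : #(M ∩ N) ≤ #({u, v} \ M) := by
    obtain hMN | ⟨w, hw⟩ := (M ∩ N).eq_empty_or_nonempty
    · simp [hMN]
    obtain ⟨hwM, hwN⟩ := mem_inter.mp hw
    have huw : G.Adj u w := (G.mem_neighborFinset _ _).mp hwN
    have hvw : G.Adj v w := (G.mem_neighborFinset _ _).mp (htwin ▸ hwN)
    have hS_M : {u, v} \ M = {u, v} := by
      simp [hM.1.notMem_of_adj hwM huw, hM.1.notMem_of_adj hwM hvw]
    have hN : #N = 3 := (G.card_neighborFinset_eq_degree u).trans hdeg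
    have := hM.1.card_inter_lt_of_adj ha hb hab
    rw [hS_M, card_pair hne]
    omega
  refine ⟨(M \ N) ∪ {u, v}, hM.of_card_le (hM.1.sdiff_union hS hSN)
    (card_le_card_sdiff_union hcard), by simp, by simp, fun x hx => ?_⟩
  have : x ≠ v := fun h => by simp [h, N, htwin] at hx
  simp [hx, this, (G.ne_of_adj ((G.mem_neighborFinset _ _).mp hx)).symm]
end

section
/- Let u and v be adjacent vertices of a graph G such that N(v) \ {u} is a clique (u and v form a funnel). Then there exists a maximum independent set I of G with |I ∩ {u,v}| = 1, i.e., {u} and {v} are alternative sets. -/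
variable {V : Type*} [Fintype V] [DecidableEq V]

/-! If a maximum independent set `I` misses both `u` and `v`, then `v` has a neighbour `w ∈ I`
(otherwise `I ∪ {v}` would be larger), and `w ≠ u`. Any other neighbour of `v` in `I` would be
adjacent to `w`, since `N(v) \ {u}` is a clique, so `w` is the only one, and exchanging `w` for `v`
gives a maximum independent set that contains `v` but not `u`. -/

omit [DecidableEq V] in
lemma exists_isMaxIndep_s4 (G : SimpleGraph V) : ∃ I, IsMaxIndep G I := by
  classical
  obtain ⟨I, hI, hmax⟩ := Finset.exists_max_image
    ((Finset.univ : Finset (Finset V)).filter (IsIndep G)) Finset.card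
    ⟨∅, Finset.mem_filter.mpr ⟨Finset.mem_univ _, by simp [IsIndep]⟩⟩
  exact ⟨I, (Finset.mem_filter.mp hI).2,
    fun J hJ => hmax J (Finset.mem_filter.mpr ⟨Finset.mem_univ _, hJ⟩)⟩

section

omit [Fintype V]

namespace IsIndep

variable {G : SimpleGraph V}

lemma insert {I : Finset V} {v : V} (hI : IsIndep G I) (hv : ∀ b ∈ I, ¬ G.Adj v b) :
    IsIndep G (insert v I) := by
  intro a ha b hb hab
  rcases Finset.mem_insert.mp ha with rfl | haI
  · rcases Finset.mem_insert.mp hb with rfl | hbI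
    · exact G.irrefl hab
    · exact hv b hbI hab
  · rcases Finset.mem_insert.mp hb with rfl | hbI
    · exact hv a haI hab.symm
    · exact hI a haI b hbI hab

omit [DecidableEq V] in
lemma subset {I J : Finset V} (hI : IsIndep G I) (hJI : J ⊆ I) : IsIndep G J :=
  fun a ha b hb => hI a (hJI ha) b (hJI hb)

end IsIndep

namespace IsMaxIndep

variable {G : SimpleGraph V} {I : Finset V} {v : V}

lemma exists_adj_of_notMem (hI : IsMaxIndep G I) (hv : v ∉ I) : ∃ w ∈ I, G.Adj v w := by
  by_contra! hno
  have := hI.2 _ (hI.1.insert hno)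
  rw [Finset.card_insert_of_notMem hv] at this
  omega

lemma insert_erase {w : V} (hI : IsMaxIndep G I) (hw : w ∈ I) (hv : v ∉ I)
    (honly : ∀ b ∈ I, G.Adj v b → b = w) : IsMaxIndep G (insert v (I.erase w)) := by
  have hindep : IsIndep G (insert v (I.erase w)) :=
    (hI.1.subset (Finset.erase_subset w I)).insert fun b hb hvb =>
      (Finset.mem_erase.mp hb).1 (honly b (Finset.mem_of_mem_erase hb) hvb)
  have hcard : (insert v (I.erase w)).card = I.card := by
    rw [Finset.card_insert_of_notMem (fun h => hv (Finset.mem_of_mem_erase h)),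
      Finset.card_erase_add_one hw]
  exact ⟨hindep, fun J hJ => hcard ▸ hI.2 J hJ⟩

end IsMaxIndep

lemma Finset.card_inter_pair_eq_one {I : Finset V} {u v : V} (hu : u ∉ I) (hv : v ∈ I) :
    (I ∩ {u, v}).card = 1 := by
  rw [Finset.card_eq_one]
  refine ⟨v, ?_⟩
  ext a
  simp only [Finset.mem_inter, Finset.mem_insert, Finset.mem_singleton]
  constructor
  · rintro ⟨ha, rfl | rfl⟩
    · exact absurd ha hu
    · rfl
  · rintro rfl
    exact ⟨hv, Or.inr rfl⟩

end

theorem funnel_alternative (G : SimpleGraph V) [DecidableRel G.Adj] (u v : V)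
    (huv : G.Adj u v)
    (hclique : ∀ a ∈ (G.neighborFinset v).erase u, ∀ b ∈ (G.neighborFinset v).erase u,
      a ≠ b → G.Adj a b) :
    ∃ I : Finset V, IsMaxIndep G I ∧ (I ∩ {u, v}).card = 1 := by
  obtain ⟨I, hI⟩ := exists_isMaxIndep_s4 G
  by_cases hu : u ∈ I
  · have hv : v ∉ I := fun hv => hI.1 u hu v hv huv
    exact ⟨I, hI, Finset.pair_comm u v ▸ Finset.card_inter_pair_eq_one hv hu⟩
  by_cases hv : v ∈ I
  · exact ⟨I, hI, Finset.card_inter_pair_eq_one hu hv⟩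
  obtain ⟨w, hwI, hvw⟩ := hI.exists_adj_of_notMem hv
  have mem_clique : ∀ b ∈ I, G.Adj v b → b ∈ (G.neighborFinset v).erase u := fun b hb hvb =>
    Finset.mem_erase.mpr ⟨fun h => hu (h ▸ hb), (G.mem_neighborFinset v b).mpr hvb⟩
  have honly : ∀ b ∈ I, G.Adj v b → b = w := fun b hb hvb => by
    by_contra hbw
    exact hI.1 b hb w hwI (hclique b (mem_clique b hb hvb) w (mem_clique w hwI hvw) hbw)
  have hu' : u ∉ insert v (I.erase w) := by simp [G.ne_of_adj huv, hu]
  exact ⟨_, hI.insert_erase hwI hv honly,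
    Finset.card_inter_pair_eq_one hu' (Finset.mem_insert_self v (I.erase w))⟩
end

section
/- Let S ⊆ V and k ∈ ℕ such that every maximum independent set I of G satisfies |I ∩ S| ≥ k. If v is a vertex with |S| − |N(v) ∩ S| < k, then no maximum independent set of G contains v. -/
variable {V : Type*} [Fintype V] [DecidableEq V]

theorem packing_exclusion (G : SimpleGraph V) [DecidableRel G.Adj] (S : Finset V) (k : ℕ)
    (hconstraint : ∀ I : Finset V, IsMaxIndep G I → k ≤ (I ∩ S).card)
    (v : V) (hv : S.card - (G.neighborFinset v ∩ S).card < k) :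
    ∀ I : Finset V, IsMaxIndep G I → v ∉ I := by
  intro I hI hvI
  have hk := hconstraint I hI
  have hsub : I ∩ S ⊆ S \ (G.neighborFinset v ∩ S) := by
    intro u hu
    simp only [Finset.mem_inter, Finset.mem_sdiff, SimpleGraph.mem_neighborFinset] at *
    exact ⟨hu.2, fun h => hI.1 v hvI u hu.1 h.1⟩
  have hcard := Finset.card_le_card hsub
  rw [Finset.card_sdiff_of_subset (Finset.inter_subset_right)] at hcard
  omega
end
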